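/- arXiv:1903.02899 — 6 statements merged into one kernel-verified Lean document; each statement's English description precedes it below -/
import Mathlib

section
/- Let W : {0,1} → Y₁ and Q : {0,1} → Y₂ be two (not necessarily identical) binary-input memoryless symmetric channels with symmetry involutions π₁ and σ₁, and write x·y for the action of x ∈ {0,1} by these involutions, extended componentwise to pairs. Define the first split channel W₂⁽¹⁾((y₁,y₂)|u₁) = (1/2) ∑_{u₂∈{0,1}} W(y₁|u₁⊕u₂) Q(y₂|u₂). Then for all u₁, a₁, a₂ ∈ {0,1} and all (y₁,y₂) ∈ Y₁×Y₂: W₂⁽¹⁾((y₁,y₂)|u₁) = W₂⁽¹⁾( (a₁⊕a₂, a₂)·(y₁,y₂) | u₁⊕a₁ ). In particular W₂⁽¹⁾ is itself a BMS channel on the output alphabet Y₁×Y₂. -/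
open scoped BigOperators

/-- The action of an input bit on the output alphabet of a BMS channel:
`x · y = π_x(y)`, where `π₀` is the identity and `π₁ = π` is the symmetry
involution. -/
def bmsAct {Y : Type*} (π : Y → Y) (x : Bool) (y : Y) : Y :=
  if x then π y else y

/-- The first split channel of the general one-step polar transform:
`(W ⊞ Q)((y₁,y₂)|u₁) = (1/2) ∑_{u₂∈{0,1}} W(y₁|u₁⊕u₂) Q(y₂|u₂)`
(`W x y` denotes `W(y|x)`). -/
noncomputable def split1 {Y₁ Y₂ : Type*}
    (W : Bool → Y₁ → ℝ) (Q : Bool → Y₂ → ℝ) :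
    Bool → (Y₁ × Y₂) → ℝ :=
  fun u₁ y => (1 / 2) * ∑ u₂ : Bool, W (xor u₁ u₂) y.1 * Q u₂ y.2

/-- for two BMS channels `W` and `Q` with symmetry involutions
`π₁` and `σ₁`, the first split channel `W₂⁽¹⁾ = W ⊞ Q` satisfies
`W₂⁽¹⁾((y₁,y₂)|u₁) = W₂⁽¹⁾((a₁⊕a₂, a₂)·(y₁,y₂) | u₁⊕a₁)` for all
`u₁, a₁, a₂`; in particular `W₂⁽¹⁾` is itself a BMS channel on `Y₁ × Y₂`,
i.e. it admits an involutive symmetry permutation. -/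
theorem split1_symmetric {Y₁ Y₂ : Type*}
    (W : Bool → Y₁ → ℝ) (Q : Bool → Y₂ → ℝ)
    (π₁ : Y₁ → Y₁) (σ₁ : Y₂ → Y₂)
    (hπ : Function.Involutive π₁) (hσ : Function.Involutive σ₁)
    (hW : ∀ y, W true y = W false (π₁ y))
    (hQ : ∀ y, Q true y = Q false (σ₁ y)) :
    (∀ (u₁ a₁ a₂ : Bool) (y₁ : Y₁) (y₂ : Y₂),
      split1 W Q u₁ (y₁, y₂) =
        split1 W Q (xor u₁ a₁)
          (bmsAct π₁ (xor a₁ a₂) y₁, bmsAct σ₁ a₂ y₂)) ∧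
    (∃ τ : Y₁ × Y₂ → Y₁ × Y₂, Function.Involutive τ ∧
      ∀ y : Y₁ × Y₂, split1 W Q true y = split1 W Q false (τ y)) := by
  have hW'' : ∀ (x a : Bool) (y : Y₁), W x (bmsAct π₁ a y) = W (xor x a) y := by
    intro x a y
    cases a <;> cases x <;> simp [bmsAct, hW, hπ y]
  have hQ'' : ∀ (x a : Bool) (y : Y₂), Q x (bmsAct σ₁ a y) = Q (xor x a) y := by
    intro x a y
    cases a <;> cases x <;> simp [bmsAct, hQ, hσ y]
  have main : ∀ (u₁ a₁ a₂ : Bool) (y₁ : Y₁) (y₂ : Y₂),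
      split1 W Q u₁ (y₁, y₂) =
        split1 W Q (xor u₁ a₁)
          (bmsAct π₁ (xor a₁ a₂) y₁, bmsAct σ₁ a₂ y₂) := by
    intro u₁ a₁ a₂ y₁ y₂
    simp only [split1, Fintype.sum_bool]
    cases u₁ <;> cases a₁ <;> cases a₂ <;> simp [hW'', hQ''] <;> ring
  refine ⟨main, ⟨fun y => (π₁ y.1, y.2), fun y => by simp [hπ y.1], fun y => ?_⟩⟩
  have := main true true false y.1 y.2
  simpa [bmsAct] using this
end

section
/- Let H : {0,1} → Z, W : {0,1} → Y₁, and Q : {0,1} → Y₂ be binary-input discrete memoryless channels, and suppose H is degraded with respect to W (H ≼ W). Then the first split channel of H and Q is degraded with respect to the first split channel of W and Q: H ⊞ Q ≼ W ⊞ Q, where (W ⊞ Q)((y₁,y₂)|u₁) = (1/2) ∑_{u₂∈{0,1}} W(y₁|u₁⊕u₂) Q(y₂|u₂). -/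
open scoped BigOperators

/-- `W : {0,1} → Y` (with `W x y` denoting `W(y|x)`) is a valid binary-input
discrete memoryless channel: nonnegative transition probabilities summing to
one for each input. -/
def IsChannel {Y : Type*} [Fintype Y] (W : Bool → Y → ℝ) : Prop :=
  (∀ x y, 0 ≤ W x y) ∧ ∀ x, ∑ y : Y, W x y = 1

/-- `H ≼ W`: the channel `H : {0,1} → Z` is (stochastically) degraded with
respect to `W : {0,1} → Y`, i.e. there is an intermediate channel
`P : Y → Z` with `H(z|x) = ∑_y W(y|x) P(z|y)`. -/
def Degraded {Y Z : Type*} [Fintype Y] [Fintype Z]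
    (H : Bool → Z → ℝ) (W : Bool → Y → ℝ) : Prop :=
  ∃ P : Y → Z → ℝ, (∀ y z, 0 ≤ P y z) ∧ (∀ y, ∑ z : Z, P y z = 1) ∧
    ∀ x z, H x z = ∑ y : Y, W x y * P y z

/-- if `H ≼ W`, then `H ⊞ Q ≼ W ⊞ Q`. -/
theorem split1_degraded_left {Y₁ Y₂ Z : Type*}
    [Fintype Y₁] [Fintype Y₂] [Fintype Z]
    (H : Bool → Z → ℝ) (W : Bool → Y₁ → ℝ) (Q : Bool → Y₂ → ℝ)
    (hH : IsChannel H) (hW : IsChannel W) (hQ : IsChannel Q)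
    (hdeg : Degraded H W) :
    Degraded (split1 H Q) (split1 W Q) := by
  classical
  obtain ⟨P, hP0, hP1, hPH⟩ := hdeg
  refine ⟨fun y zy => P y.1 zy.1 * if zy.2 = y.2 then 1 else 0, ?_, ?_, ?_⟩
  · intro y zy
    have := hP0 y.1 zy.1
    positivity
  · intro y
    simp [Fintype.sum_prod_type, ← Finset.mul_sum, hP1 y.1]
  · intro x zy
    simp only [split1, hPH, Fintype.sum_prod_type, Finset.sum_mul, Finset.mul_sum]
    rw [Finset.sum_comm]
    refine Finset.sum_congr rfl fun y₁ _ => ?_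
    rw [Finset.sum_comm]
    refine Finset.sum_congr rfl fun u₂ _ => ?_
    simp [Finset.sum_ite_eq', Finset.sum_mul, mul_comm, mul_assoc, mul_left_comm]
end

section
/- Let H, W, T, Q be binary-input discrete memoryless channels, and suppose H is degraded with respect to W (H ≼ W) and T is degraded with respect to Q (T ≼ Q). Then the first split channels satisfy H ⊞ T ≼ W ⊞ Q, where (W ⊞ Q)((y₁,y₂)|u₁) = (1/2) ∑_{u₂∈{0,1}} W(y₁|u₁⊕u₂) Q(y₂|u₂). -/
open scoped BigOperators

/-- if `H ≼ W` and `T ≼ Q`, then `H ⊞ T ≼ W ⊞ Q`. -/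
theorem split1_degraded_both {Y₁ Y₂ Z₁ Z₂ : Type*}
    [Fintype Y₁] [Fintype Y₂] [Fintype Z₁] [Fintype Z₂]
    (H : Bool → Z₁ → ℝ) (T : Bool → Z₂ → ℝ)
    (W : Bool → Y₁ → ℝ) (Q : Bool → Y₂ → ℝ)
    (hH : IsChannel H) (hT : IsChannel T)
    (hW : IsChannel W) (hQ : IsChannel Q)
    (hdegHW : Degraded H W) (hdegTQ : Degraded T Q) :
    Degraded (split1 H T) (split1 W Q) := by
  obtain ⟨P₁, hP₁0, hP₁1, hP₁⟩ := hdegHW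
  obtain ⟨P₂, hP₂0, hP₂1, hP₂⟩ := hdegTQ
  refine ⟨fun y z => P₁ y.1 z.1 * P₂ y.2 z.2, fun y z => mul_nonneg (hP₁0 _ _) (hP₂0 _ _),
    fun y => ?_, fun x z => ?_⟩
  · rw [Fintype.sum_prod_type, ← Finset.sum_mul_sum]
    rw [hP₁1, hP₂1, one_mul]
  · simp only [split1, hP₁, hP₂, Fintype.sum_prod_type, Finset.sum_mul_sum,
      Finset.mul_sum, Finset.sum_mul]
    rw [Finset.sum_comm (s := (Finset.univ : Finset Bool)) (t := (Finset.univ : Finset Y₂))]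
    conv_lhs =>
      enter [2, y₂]
      rw [Finset.sum_comm (s := (Finset.univ : Finset Bool)) (t := (Finset.univ : Finset Y₁))]
    rw [Finset.sum_comm (s := (Finset.univ : Finset Y₂)) (t := (Finset.univ : Finset Y₁))]
    refine Finset.sum_congr rfl fun y₁ _ => Finset.sum_congr rfl fun y₂ _ =>
      Finset.sum_congr rfl fun u₂ _ => ?_
    ring
end

section
/- Let W : {0,1} → Y₁ and Q : {0,1} → Y₂ be two independent binary erasure channels with erasure probabilities ε₁ and ε₂ respectively (so Z(W) = ε₁ and Z(Q) = ε₂). Then the Bhattacharyya parameter of the first split channel of the general one-step polar transform satisfies Z(W ⊞ Q) = Z(W) + Z(Q) − Z(W)·Z(Q) = ε₁ + ε₂ − ε₁ε₂. -/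
open scoped BigOperators

/-- The Bhattacharyya parameter `Z(W) = ∑_{y∈Y} √(W(y|0) W(y|1))` of a
binary-input channel `W : {0,1} → Y` (`W x y` denotes `W(y|x)`). -/
noncomputable def bhattacharyya {Y : Type*} [Fintype Y] (W : Bool → Y → ℝ) : ℝ :=
  ∑ y : Y, Real.sqrt (W false y * W true y)

/-- The binary erasure channel `BEC(ε)` with output alphabet `{0, 1, e}`
(erasure `e` modeled as `none`): `W(0|0) = W(1|1) = 1 − ε`,
`W(e|0) = W(e|1) = ε`, `W(1|0) = W(0|1) = 0`. -/
noncomputable def BEC (ε : ℝ) : Bool → Option Bool → ℝ :=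
  fun x y => match y with
    | none => ε
    | some b => if b = x then 1 - ε else 0

lemma bhattacharyya_BEC (ε : ℝ) (h : 0 ≤ ε) : bhattacharyya (BEC ε) = ε := by
  simp [bhattacharyya, BEC, Fintype.sum_option, Fintype.sum_bool, Real.sqrt_mul_self h]

/-- for two independent binary erasure channels `W = BEC(ε₁)`
and `Q = BEC(ε₂)` (so `Z(W) = ε₁`, `Z(Q) = ε₂`), the first split channel
satisfies `Z(W ⊞ Q) = Z(W) + Z(Q) − Z(W)·Z(Q) = ε₁ + ε₂ − ε₁ε₂`. -/
theorem bhattacharyya_split1_BEC (ε₁ ε₂ : ℝ)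
    (h₁ : 0 ≤ ε₁) (h₁' : ε₁ ≤ 1) (h₂ : 0 ≤ ε₂) (h₂' : ε₂ ≤ 1) :
    bhattacharyya (split1 (BEC ε₁) (BEC ε₂)) =
        bhattacharyya (BEC ε₁) + bhattacharyya (BEC ε₂) -
          bhattacharyya (BEC ε₁) * bhattacharyya (BEC ε₂) ∧
      bhattacharyya (split1 (BEC ε₁) (BEC ε₂)) = ε₁ + ε₂ - ε₁ * ε₂ := by
  have key : bhattacharyya (split1 (BEC ε₁) (BEC ε₂)) = ε₁ + ε₂ - ε₁ * ε₂ := by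
    simp [bhattacharyya, split1, BEC, Fintype.sum_prod_type, Fintype.sum_option,
      Fintype.sum_bool]
    rw [Real.sqrt_mul_self (by nlinarith), Real.sqrt_mul_self (by nlinarith),
      Real.sqrt_mul_self (by nlinarith)]
    ring
  rw [bhattacharyya_BEC ε₁ h₁, bhattacharyya_BEC ε₂ h₂]
  exact ⟨key, key⟩
end

section
/- Fix n ≥ 1 and N = 2ⁿ. Let (W⁽¹⁾, …, W⁽ᴺ⁾) and (H⁽¹⁾, …, H⁽ᴺ⁾) be two vectors of binary-input discrete memoryless channels such that H⁽ʲ⁾ is degraded with respect to W⁽ʲ⁾ for every j = 1, …, N. Construct the bit channels W_N⁽ⁱ⁾ and H_N⁽ⁱ⁾ by recursively applying the general one-step polar transforms ⊞ and ⊛ over n levels according to the binary expansion of i−1 (at level k, taking the ⊞-output if the k-th bit is 0 and the ⊛-output if it is 1, with the two input channels of each transform drawn from the outputs of the previous level as in the polar-code tree construction). Then for every i = 1, …, N, the bit channel H_N⁽ⁱ⁾ is degraded with respect to W_N⁽ⁱ⁾. -/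
open scoped BigOperators

/-- The second split channel of the general one-step polar transform:
`(W ⊛ Q)((y₁,y₂,u₁)|u₂) = (1/2) W(y₁|u₁⊕u₂) Q(y₂|u₂)`. -/
noncomputable def split2 {Y₁ Y₂ : Type*}
    (W : Bool → Y₁ → ℝ) (Q : Bool → Y₂ → ℝ) :
    Bool → (Y₁ × Y₂ × Bool) → ℝ :=
  fun u₂ y => (1 / 2) * W (xor y.2.2 u₂) y.1 * Q u₂ y.2.1

/-- The output alphabet of a bit channel of the polar-code tree construction,
indexed by the sequence of choices `bs` (one per level, outermost level
first): a `false` entry takes the `⊞`-output (output alphabet `Y' × Y'`) and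
a `true` entry takes the `⊛`-output (output alphabet `Y' × Y' × {0,1}`). -/
def polarOut (Y : Type*) : List Bool → Type _
  | [] => Y
  | false :: bs => polarOut Y bs × polarOut Y bs
  | true :: bs => polarOut Y bs × polarOut Y bs × Bool

instance polarOutFintype (Y : Type*) [Fintype Y] :
    (bs : List Bool) → Fintype (polarOut Y bs)
  | [] => inferInstanceAs (Fintype Y)
  | false :: bs =>
      letI := polarOutFintype Y bs
      inferInstanceAs (Fintype (polarOut Y bs × polarOut Y bs))
  | true :: bs =>
      letI := polarOutFintype Y bs
      inferInstanceAs (Fintype (polarOut Y bs × polarOut Y bs × Bool))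

/-- The bit channel of the general polar-code tree construction of length
`N = 2 ^ bs.length`, built from the vector `V` of (possibly different)
underlying channels by recursively applying the one-step transforms over the
levels: at each level the transform combines the bit channel built from the
first half of the channel vector with the one built from the second half,
taking the `⊞`-output if the corresponding bit is `false` (`0`) and the
`⊛`-output if it is `true` (`1`). -/
noncomputable def polarBit {Y : Type*} :
    (bs : List Bool) → (V : Fin (2 ^ bs.length) → Bool → Y → ℝ) →
      Bool → polarOut Y bs → ℝ
  | [], V => V 0
  | false :: bs, V =>
      split1
        (polarBit bs (fun j => V ⟨j.1, by have := j.2; simp [pow_succ] at *; omega⟩))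
        (polarBit bs (fun j => V ⟨j.1 + 2 ^ bs.length, by have := j.2; simp [pow_succ] at *; omega⟩))
  | true :: bs, V =>
      split2
        (polarBit bs (fun j => V ⟨j.1, by have := j.2; simp [pow_succ] at *; omega⟩))
        (polarBit bs (fun j => V ⟨j.1 + 2 ^ bs.length, by have := j.2; simp [pow_succ] at *; omega⟩))


lemma degraded_split1 {Y₁ Y₂ Z₁ Z₂ : Type*}
    [Fintype Y₁] [Fintype Y₂] [Fintype Z₁] [Fintype Z₂]
    {W₁ : Bool → Y₁ → ℝ} {W₂ : Bool → Y₂ → ℝ}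
    {H₁ : Bool → Z₁ → ℝ} {H₂ : Bool → Z₂ → ℝ}
    (h₁ : Degraded H₁ W₁) (h₂ : Degraded H₂ W₂) :
    Degraded (split1 H₁ H₂) (split1 W₁ W₂) := by
  obtain ⟨P₁, hP₁0, hP₁1, hP₁⟩ := h₁
  obtain ⟨P₂, hP₂0, hP₂1, hP₂⟩ := h₂
  refine ⟨fun y z => P₁ y.1 z.1 * P₂ y.2 z.2, fun y z => mul_nonneg (hP₁0 _ _) (hP₂0 _ _), ?_, ?_⟩
  · intro y
    simp only [Fintype.sum_prod_type]
    rw [← Finset.sum_mul_sum, hP₁1, hP₂1, mul_one]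
  · intro x z
    simp only [split1, hP₁, hP₂, Fintype.sum_prod_type, Finset.mul_sum, Finset.sum_mul]
    refine Eq.trans (Finset.sum_congr rfl fun b _ => Finset.sum_comm) ?_
    refine Eq.trans Finset.sum_comm ?_
    refine Finset.sum_congr rfl fun y₁ _ => ?_
    refine Eq.trans Finset.sum_comm ?_
    exact Finset.sum_congr rfl fun y₂ _ => Finset.sum_congr rfl fun b _ => by ring

lemma degraded_split2 {Y₁ Y₂ Z₁ Z₂ : Type*}
    [Fintype Y₁] [Fintype Y₂] [Fintype Z₁] [Fintype Z₂]
    {W₁ : Bool → Y₁ → ℝ} {W₂ : Bool → Y₂ → ℝ}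
    {H₁ : Bool → Z₁ → ℝ} {H₂ : Bool → Z₂ → ℝ}
    (h₁ : Degraded H₁ W₁) (h₂ : Degraded H₂ W₂) :
    Degraded (split2 H₁ H₂) (split2 W₁ W₂) := by
  obtain ⟨P₁, hP₁0, hP₁1, hP₁⟩ := h₁
  obtain ⟨P₂, hP₂0, hP₂1, hP₂⟩ := h₂
  refine ⟨fun y z => P₁ y.1 z.1 * P₂ y.2.1 z.2.1 * (if y.2.2 = z.2.2 then 1 else 0),
    fun y z => mul_nonneg (mul_nonneg (hP₁0 _ _) (hP₂0 _ _)) (by split <;> norm_num), ?_, ?_⟩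
  · intro y
    simp only [Fintype.sum_prod_type, mul_ite, mul_one, mul_zero, Finset.sum_ite_eq,
      Finset.mem_univ, if_true]
    simp [← Finset.mul_sum, ← Finset.sum_mul, hP₁1, hP₂1]
  · intro x z
    simp only [split2, hP₁, hP₂, Fintype.sum_prod_type, mul_ite, mul_one, mul_zero,
      Finset.sum_ite_eq, Finset.sum_ite_eq', Finset.mem_univ, if_true]
    rw [mul_assoc, Finset.sum_mul_sum]
    simp only [Finset.mul_sum]
    exact Finset.sum_congr rfl fun y₁ _ => Finset.sum_congr rfl fun y₂ _ => by ring

lemma polarBit_degraded_aux {Y Z : Type*} [Fintype Y] [Fintype Z] :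
    ∀ (bs : List Bool) (W : Fin (2 ^ bs.length) → Bool → Y → ℝ)
      (H : Fin (2 ^ bs.length) → Bool → Z → ℝ),
      (∀ j, Degraded (H j) (W j)) → Degraded (polarBit bs H) (polarBit bs W)
  | [], W, H, h => h 0
  | false :: bs, W, H, h => by
      show Degraded (split1 _ _) (split1 _ _)
      exact degraded_split1
        (polarBit_degraded_aux bs _ _ fun j => h _)
        (polarBit_degraded_aux bs _ _ fun j => h _)
  | true :: bs, W, H, h => by
      show Degraded (split2 _ _) (split2 _ _)
      exact degraded_split2
        (polarBit_degraded_aux bs _ _ fun j => h _)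
        (polarBit_degraded_aux bs _ _ fun j => h _)

/-- fix `n ≥ 1`, `N = 2ⁿ`, and two vectors
`(W⁽¹⁾, …, W⁽ᴺ⁾)`, `(H⁽¹⁾, …, H⁽ᴺ⁾)` of binary-input channels with
`H⁽ʲ⁾ ≼ W⁽ʲ⁾` for every `j`. Then for every bit channel of the general
polar-code tree construction (i.e. for every sequence `bs` of `n`
upper/lower choices, one per level), the bit channel built from the `H`'s is
degraded with respect to the bit channel built from the `W`'s:
`H_N⁽ⁱ⁾ ≼ W_N⁽ⁱ⁾`. -/
theorem polarBit_degraded {Y Z : Type*} [Fintype Y] [Fintype Z]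
    (n : ℕ) (hn : 1 ≤ n) (bs : List Bool) (hbs : bs.length = n)
    (W : Fin (2 ^ bs.length) → Bool → Y → ℝ)
    (H : Fin (2 ^ bs.length) → Bool → Z → ℝ)
    (hdeg : ∀ j, Degraded (H j) (W j)) :
    Degraded (polarBit bs H) (polarBit bs W) := by
  exact polarBit_degraded_aux bs W H hdeg
end

section
/- Let W : {0,1} → Y₁ and Q : {0,1} → Y₂ be binary-input discrete memoryless channels, and let P₁ : Y₁ → Z₁ and P₂ : Y₂ → Z₂ be intermediate channels. Define the product intermediate channel P* : Y₁×Y₂ → Z₁×Z₂ by P*((z₁,z₂)|(y₁,y₂)) = P₁(z₁|y₁) P₂(z₂|y₂). If H(z₁|x) = ∑_{y₁} W(y₁|x) P₁(z₁|y₁) and T(z₂|x) = ∑_{y₂} Q(y₂|x) P₂(z₂|y₂) for all x, then the first split channel satisfies (H ⊞ T)((z₁,z₂)|u₁) = ∑_{(y₁,y₂)∈Y₁×Y₂} (W ⊞ Q)((y₁,y₂)|u₁) · P*((z₁,z₂)|(y₁,y₂)) for all u₁ ∈ {0,1} and all (z₁,z₂) ∈ Z₁×Z₂; i.e., P* is an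 explicit degrading channel witnessing H ⊞ T ≼ W ⊞ Q. -/
open scoped BigOperators

/-- if `P₁ : Y₁ → Z₁` and `P₂ : Y₂ → Z₂` are intermediate
channels degrading `W` to `H` and `Q` to `T` respectively, then the product
intermediate channel `P*((z₁,z₂)|(y₁,y₂)) = P₁(z₁|y₁) P₂(z₂|y₂)` degrades
`W ⊞ Q` to `H ⊞ T`:
`(H ⊞ T)((z₁,z₂)|u₁) = ∑_{(y₁,y₂)} (W ⊞ Q)((y₁,y₂)|u₁) P*((z₁,z₂)|(y₁,y₂))`. -/
theorem split1_degrading_witness {Y₁ Y₂ Z₁ Z₂ : Type*}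
    [Fintype Y₁] [Fintype Y₂] [Fintype Z₁] [Fintype Z₂]
    (W : Bool → Y₁ → ℝ) (Q : Bool → Y₂ → ℝ)
    (H : Bool → Z₁ → ℝ) (T : Bool → Z₂ → ℝ)
    (P₁ : Y₁ → Z₁ → ℝ) (P₂ : Y₂ → Z₂ → ℝ)
    (hP₁nonneg : ∀ y z, 0 ≤ P₁ y z) (hP₁sum : ∀ y, ∑ z : Z₁, P₁ y z = 1)
    (hP₂nonneg : ∀ y z, 0 ≤ P₂ y z) (hP₂sum : ∀ y, ∑ z : Z₂, P₂ y z = 1)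
    (hH : ∀ x z₁, H x z₁ = ∑ y₁ : Y₁, W x y₁ * P₁ y₁ z₁)
    (hT : ∀ x z₂, T x z₂ = ∑ y₂ : Y₂, Q x y₂ * P₂ y₂ z₂) :
    ∀ (u₁ : Bool) (z : Z₁ × Z₂),
      split1 H T u₁ z =
        ∑ y : Y₁ × Y₂, split1 W Q u₁ y * (P₁ y.1 z.1 * P₂ y.2 z.2) := by
  intro u₁ z
  simp only [split1, hH, hT]
  have key : ∀ u₂ : Bool,
      (∑ y₁ : Y₁, W (xor u₁ u₂) y₁ * P₁ y₁ z.1) * (∑ y₂ : Y₂, Q u₂ y₂ * P₂ y₂ z.2)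
      = ∑ y : Y₁ × Y₂, (W (xor u₁ u₂) y.1 * P₁ y.1 z.1) * (Q u₂ y.2 * P₂ y.2 z.2) := by
    intro u₂
    rw [Finset.sum_mul_sum]
    rw [Fintype.sum_prod_type]
  simp only [key, Finset.mul_sum]
  rw [Finset.sum_comm]
  refine Finset.sum_congr rfl fun y _ => ?_
  rw [Finset.sum_mul]
  refine Finset.sum_congr rfl fun u₂ _ => ?_
  ring
end
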